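/- arXiv:1911.05012 — 9 statements merged into one kernel-verified Lean document; each statement's English description precedes it below -/
import Mathlib

section
/- If G is a persistent graph on vertices {1,...,n} and a, b, c are vertices with b < c, both b and c adjacent to a, and no vertex strictly between b and c is in the closed neighborhood of a, then b and c are adjacent in G. -/
/-- A graph on the ordered vertex set `Fin n` (representing `{1,…,n}`) is *persistent* if it
contains the Hamilton path `1,…,n`, satisfies the X-property and the bar-property. -/
def IsPersistent {n : ℕ} (G : SimpleGraph (Fin n)) : Prop :=
  (∀ i j : Fin n, (i : ℕ) + 1 = (j : ℕ) → G.Adj i j) ∧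
  (∀ a b c d : Fin n, a < b → b < c → c < d → G.Adj a c → G.Adj b d → G.Adj a d) ∧
  (∀ a b : Fin n, (a : ℕ) + 1 < (b : ℕ) → G.Adj a b →
    ∃ x : Fin n, a < x ∧ x < b ∧ G.Adj a x ∧ G.Adj x b)

lemma aux_left {n : ℕ} (G : SimpleGraph (Fin n)) (hG : IsPersistent G)
    (a b c : Fin n) (hab : a < b) (hbc : b < c) (hAab : G.Adj a b)
    (hno : ∀ x : Fin n, b < x → x < c → ¬(x = a ∨ G.Adj a x)) :
    ∀ k : ℕ, ∀ x : Fin n, a ≤ x → x ≤ b → G.Adj x c → (b : ℕ) - (x : ℕ) ≤ k →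
      G.Adj b c := by
  intro k
  induction k with
  | zero =>
    intro x hax hxb hxc hk
    have hxb' : (x : ℕ) ≤ (b : ℕ) := hxb
    have : x = b := Fin.ext (by omega)
    exact this ▸ hxc
  | succ k ih =>
    intro x hax hxb hxc hk
    rcases eq_or_lt_of_le hxb with h | hxlt
    · exact h ▸ hxc
    · have hx1 : (x : ℕ) < (b : ℕ) := hxlt
      have hb1 : (b : ℕ) < (c : ℕ) := hbc
      obtain ⟨y, hxy, hyc, hAxy, hAyc⟩ := hG.2.2 x c (by omega) hxc
      rcases le_or_gt y b with hyb | hby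
      · have hxy' : (x : ℕ) < (y : ℕ) := hxy
        have hyb' : (y : ℕ) ≤ (b : ℕ) := hyb
        exact ih y (le_of_lt (lt_of_le_of_lt hax hxy)) hyb hAyc (by omega)
      · exfalso
        apply hno y hby hyc
        rcases eq_or_lt_of_le hax with h | halt
        · exact Or.inr (h ▸ hAxy)
        · exact Or.inr (hG.2.1 a x b y halt hxlt hby hAab hAxy)

lemma aux_right {n : ℕ} (G : SimpleGraph (Fin n)) (hG : IsPersistent G)
    (a b c : Fin n) (hbc : b < c) (hca : c < a) (hAac : G.Adj a c)
    (hno : ∀ x : Fin n, b < x → x < c → ¬(x = a ∨ G.Adj a x)) :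
    ∀ k : ℕ, ∀ x : Fin n, c ≤ x → x ≤ a → G.Adj b x → (x : ℕ) - (c : ℕ) ≤ k →
      G.Adj b c := by
  intro k
  induction k with
  | zero =>
    intro x hcx hxa hbx hk
    have hcx' : (c : ℕ) ≤ (x : ℕ) := hcx
    have : x = c := Fin.ext (by omega)
    exact this ▸ hbx
  | succ k ih =>
    intro x hcx hxa hbx hk
    rcases eq_or_lt_of_le hcx with h | hclt
    · exact h ▸ hbx
    · have hc1 : (c : ℕ) < (x : ℕ) := hclt
      have hb1 : (b : ℕ) < (c : ℕ) := hbc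
      obtain ⟨y, hby, hyx, hAby, hAyx⟩ := hG.2.2 b x (by omega) hbx
      rcases le_or_gt c y with hcy | hyc
      · have hyx' : (y : ℕ) < (x : ℕ) := hyx
        have hcy' : (c : ℕ) ≤ (y : ℕ) := hcy
        exact ih y hcy (le_of_lt (lt_of_lt_of_le hyx hxa)) hAby (by omega)
      · exfalso
        apply hno y hby hyc
        rcases eq_or_lt_of_le hxa with h | hxlt
        · exact Or.inr ((h ▸ hAyx).symm)
        · exact Or.inr (hG.2.1 y c x a hyc hclt hxlt hAyx hAac.symm).symm

/-- consecutive neighbors of a vertex are adjacent. -/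
theorem consecutive_neighbors {n : ℕ} (G : SimpleGraph (Fin n)) (hG : IsPersistent G)
    (a b c : Fin n) (hbc : b < c) (hab : G.Adj a b) (hac : G.Adj a c)
    (hno : ∀ x : Fin n, b < x → x < c → ¬(x = a ∨ G.Adj a x)) :
    G.Adj b c := by
  rcases lt_trichotomy a b with hab' | hab' | hab'
  · exact aux_left G hG a b c hab' hbc hab hno ((b : ℕ) - (a : ℕ)) a le_rfl
      (le_of_lt hab') hac le_rfl
  · exact absurd hab' hab.ne
  · rcases lt_trichotomy a c with hac' | hac' | hac'
    · exact absurd (Or.inl rfl) (hno a hab' hac')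
    · exact absurd hac' hac.ne
    · exact aux_right G hG a b c hbc hac' hac hno ((a : ℕ) - (c : ℕ)) a
        (le_of_lt hac') le_rfl hab.symm le_rfl
end

section
/- If G is a persistent graph on {1,...,n}, then the graph G' obtained from G by adding two new vertices 0 and n+1, each adjacent to every other vertex (including each other), is a persistent graph on the ordered vertex set {0,1,...,n+1}. -/
/-- The extension `Ĝ` of `G` by two universal vertices `0` and `n+1`.  Vertices of `G`
(elements of `Fin n`, representing `1,…,n`) are embedded into `Fin (n+2)` via `v ↦ v+1`. -/
def extendGraph (n : ℕ) (G : SimpleGraph (Fin n)) : SimpleGraph (Fin (n + 2)) where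
  Adj u v := u ≠ v ∧ ((u : ℕ) = 0 ∨ (u : ℕ) = n + 1 ∨ (v : ℕ) = 0 ∨ (v : ℕ) = n + 1 ∨
    ∃ a b : Fin n, G.Adj a b ∧
      (((a : ℕ) + 1 = (u : ℕ) ∧ (b : ℕ) + 1 = (v : ℕ)) ∨
       ((a : ℕ) + 1 = (v : ℕ) ∧ (b : ℕ) + 1 = (u : ℕ))))
  symm := by
    constructor
    rintro u v ⟨h1, h2⟩
    refine ⟨h1.symm, ?_⟩
    rcases h2 with h | h | h | h | ⟨a, b, hab, hc⟩
    · tauto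
    · tauto
    · tauto
    · tauto
    · exact Or.inr (Or.inr (Or.inr (Or.inr ⟨b, a, hab.symm, by tauto⟩)))
  loopless := by constructor; rintro u ⟨h, _⟩; exact h rfl

/-! The two new vertices are adjacent to every vertex, so an instance of any of the three
properties that involves `0` or `n + 1` is witnessed by an edge at that end; for the bar-property
the common neighbour is then the vertex next to the other endpoint along the Hamilton path.
An instance among the old vertices only is, shifted by one, an instance in `G`. -/

section PersistentProperties

variable {n : ℕ} (G : SimpleGraph (Fin n))

def ContainsOrderPath : Prop :=
  ∀ i j : Fin n, (i : ℕ) + 1 = (j : ℕ) → G.Adj i j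

def XProperty : Prop :=
  ∀ a b c d : Fin n, a < b → b < c → c < d → G.Adj a c → G.Adj b d → G.Adj a d

def BarProperty : Prop :=
  ∀ a b : Fin n, (a : ℕ) + 1 < (b : ℕ) → G.Adj a b →
    ∃ x : Fin n, a < x ∧ x < b ∧ G.Adj a x ∧ G.Adj x b

theorem isPersistent_iff :
    IsPersistent G ↔ ContainsOrderPath G ∧ XProperty G ∧ BarProperty G :=
  Iff.rfl

end PersistentProperties

namespace extendGraph

variable {n : ℕ} {G : SimpleGraph (Fin n)}

def shift (a : Fin n) : Fin (n + 2) :=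
  a.castSucc.succ

@[simp]
theorem val_shift (a : Fin n) : (shift a : ℕ) = a + 1 :=
  rfl

@[simp]
theorem shift_lt_shift {a b : Fin n} : shift a < shift b ↔ a < b := by
  simp [shift]

theorem exists_shift_eq {u : Fin (n + 2)} (h₀ : (u : ℕ) ≠ 0) (hₙ : (u : ℕ) ≠ n + 1) :
    ∃ a : Fin n, shift a = u :=
  ⟨⟨u - 1, by omega⟩, Fin.ext (by simp; omega)⟩

theorem adj_of_end {u v : Fin (n + 2)} (hu : (u : ℕ) = 0 ∨ (u : ℕ) = n + 1) (huv : u ≠ v) :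
    (extendGraph n G).Adj u v :=
  ⟨huv, by tauto⟩

@[simp]
theorem adj_shift {a b : Fin n} : (extendGraph n G).Adj (shift a) (shift b) ↔ G.Adj a b := by
  refine ⟨?_, fun h => ⟨fun e => h.ne (Fin.succ_injective _ (Fin.castSucc_injective _ e)),
    by tauto⟩⟩
  rintro ⟨-, h | h | h | h | ⟨a', b', h', ⟨ha, hb⟩ | ⟨ha, hb⟩⟩⟩
  all_goals simp only [val_shift] at *
  · omega
  · omega
  · omega
  · omega
  · obtain rfl : a' = a := Fin.ext (by omega)
    obtain rfl : b' = b := Fin.ext (by omega)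
    exact h'
  · obtain rfl : a' = b := Fin.ext (by omega)
    obtain rfl : b' = a := Fin.ext (by omega)
    exact h'.symm

theorem containsOrderPath (hG : ContainsOrderPath G) : ContainsOrderPath (extendGraph n G) := by
  intro i j hij
  have hne : i ≠ j := fun e => by subst e; omega
  by_cases hi : (i : ℕ) = 0
  · exact adj_of_end (.inl hi) hne
  by_cases hj : (j : ℕ) = n + 1
  · exact (adj_of_end (.inr hj) hne.symm).symm
  obtain ⟨a, rfl⟩ := exists_shift_eq hi (by omega)
  obtain ⟨b, rfl⟩ := exists_shift_eq (by omega) hj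
  exact adj_shift.2 (hG a b (by simpa using hij))

theorem xProperty (hG : XProperty G) : XProperty (extendGraph n G) := by
  intro a b c d hab hbc hcd hac hbd
  have had : a ≠ d := (hab.trans (hbc.trans hcd)).ne
  by_cases ha : (a : ℕ) = 0
  · exact adj_of_end (.inl ha) had
  by_cases hd : (d : ℕ) = n + 1
  · exact (adj_of_end (.inr hd) had.symm).symm
  obtain ⟨b, rfl⟩ := exists_shift_eq (u := b) (by omega) (by omega)
  obtain ⟨c, rfl⟩ := exists_shift_eq (u := c) (by omega) (by omega)
  obtain ⟨a, rfl⟩ := exists_shift_eq ha (by omega)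
  obtain ⟨d, rfl⟩ := exists_shift_eq (by omega) hd
  simp only [shift_lt_shift, adj_shift] at *
  exact hG a b c d hab hbc hcd hac hbd

theorem barProperty (hP : ContainsOrderPath G) (hG : BarProperty G) :
    BarProperty (extendGraph n G) := by
  have hP' := containsOrderPath hP
  intro a b hab hadj
  by_cases ha : (a : ℕ) = 0
  · refine ⟨⟨b - 1, by omega⟩, Fin.lt_def.2 (show (a : ℕ) < b - 1 by omega),
      Fin.lt_def.2 (show (b : ℕ) - 1 < b by omega),
      adj_of_end (.inl ha) (Fin.ne_of_val_ne (show (a : ℕ) ≠ b - 1 by omega)),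
      hP' _ _ (show (b : ℕ) - 1 + 1 = b by omega)⟩
  by_cases hb : (b : ℕ) = n + 1
  · refine ⟨⟨a + 1, by omega⟩, Fin.lt_def.2 (Nat.lt_succ_self a),
      Fin.lt_def.2 (show (a : ℕ) + 1 < b from hab), hP' _ _ rfl,
      (adj_of_end (.inr hb) (Fin.ne_of_val_ne (show (b : ℕ) ≠ a + 1 by omega))).symm⟩
  obtain ⟨a, rfl⟩ := exists_shift_eq ha (by omega)
  obtain ⟨b, rfl⟩ := exists_shift_eq (by omega) hb
  obtain ⟨x, hax, hxb, hx⟩ := hG a b (by simpa using hab) (adj_shift.1 hadj)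
  exact ⟨shift x, shift_lt_shift.2 hax, shift_lt_shift.2 hxb, adj_shift.2 hx.1, adj_shift.2 hx.2⟩

end extendGraph

/-- the extension of a persistent graph by the two universal vertices `0` and
`n+1` is again persistent (on the ordered vertex set `{0,1,…,n+1}`). -/
theorem extend_persistent {n : ℕ} (G : SimpleGraph (Fin n)) (hG : IsPersistent G) :
    IsPersistent (extendGraph n G) := by
  obtain ⟨hP, hX, hB⟩ := (isPersistent_iff G).1 hG
  exact (isPersistent_iff _).2
    ⟨extendGraph.containsOrderPath hP, extendGraph.xProperty hX, extendGraph.barProperty hP hB⟩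
end

section
/- In a persistent graph G on {1,...,n}, if x and y are two common neighbors of adjacent vertices v < w with v < x < y < w, and no common neighbor of v and w lies strictly between x and y, then x and y are adjacent. -/
private lemma lemE {n : ℕ} (G : SimpleGraph (Fin n)) (hG : IsPersistent G)
    (y w : Fin n) (hyw : y < w) (hywA : G.Adj y w) :
    ∀ (k : ℕ) (b a : Fin n), (b : ℕ) ≤ k → a < y → y < b → b ≤ w → G.Adj a b →
      ∃ t : Fin n, a < t ∧ t ≤ y ∧ G.Adj a t ∧ G.Adj t w := by
  obtain ⟨ham, hX, hbar⟩ := hG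
  intro k
  induction k with
  | zero =>
    intro b a hb hay hyb hbw hab
    exact absurd (Fin.lt_def.mp hyb) (by omega)
  | succ k ih =>
    intro b a hb hay hyb hbw hab
    obtain ⟨t, hat, htb, h1, h2⟩ := hbar a b
      (by have h1 := Fin.lt_def.mp hay; have h2 := Fin.lt_def.mp hyb; omega) hab
    rcases lt_trichotomy t y with hty | rfl | hyt
    · refine ⟨t, hat, le_of_lt hty, h1, ?_⟩
      rcases eq_or_lt_of_le hbw with rfl | hbw'
      · exact h2
      · exact hX t y b w hty hyb hbw' h2 hywA
    · exact ⟨t, hat, le_refl t, h1, hywA⟩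
    · exact ih t a (by have := Fin.lt_def.mp htb; omega) hay hyt
        (le_of_lt (lt_of_lt_of_le htb hbw)) h1

private lemma lemEstar {n : ℕ} (G : SimpleGraph (Fin n)) (hG : IsPersistent G)
    (v x : Fin n) (hvx : v < x) (hvxA : G.Adj v x) :
    ∀ (k : ℕ) (a b : Fin n), (x : ℕ) - (a : ℕ) ≤ k → v ≤ a → a < x → x < b → G.Adj a b →
      ∃ t : Fin n, x ≤ t ∧ t < b ∧ G.Adj v t ∧ G.Adj t b := by
  obtain ⟨ham, hX, hbar⟩ := hG
  intro k
  induction k with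
  | zero =>
    intro a b hk hva hax hxb hab
    exact absurd (Fin.lt_def.mp hax) (by omega)
  | succ k ih =>
    intro a b hk hva hax hxb hab
    obtain ⟨t, hat, htb, h1, h2⟩ := hbar a b
      (by have h1 := Fin.lt_def.mp hax; have h2 := Fin.lt_def.mp hxb; omega) hab
    rcases lt_trichotomy t x with htx | rfl | hxt
    · exact ih t b (by have := Fin.lt_def.mp hat; omega) (hva.trans (le_of_lt hat)) htx hxb h2
    · exact ⟨t, le_refl t, htb, hvxA, h2⟩
    · refine ⟨t, le_of_lt hxt, htb, ?_, h2⟩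
      rcases eq_or_lt_of_le hva with rfl | hva'
      · exact h1
      · exact hX v a x t hva' hax hxt hvxA h1

private lemma lemC1 {n : ℕ} (G : SimpleGraph (Fin n)) (hG : IsPersistent G)
    (y w : Fin n) (hyw : y < w) (hywA : G.Adj y w) :
    ∀ (k : ℕ) (a : Fin n), (y : ℕ) - (a : ℕ) ≤ k → a < y → G.Adj a w →
      ∃ m : Fin n, a ≤ m ∧ m < y ∧ G.Adj m y ∧ G.Adj m w := by
  intro k
  induction k with
  | zero =>
    intro a hk hay haw
    exact absurd (Fin.lt_def.mp hay) (by omega)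
  | succ k ih =>
    intro a hk hay haw
    obtain ⟨t, hat, hty, h1, h2⟩ := lemE G hG y w hyw hywA (w : ℕ) w a (le_refl _) hay hyw
      (le_refl w) haw
    rcases eq_or_lt_of_le hty with rfl | hty'
    · exact ⟨a, le_refl a, hay, h1, haw⟩
    · obtain ⟨m, htm, hmy, h3, h4⟩ := ih t (by have := Fin.lt_def.mp hat; omega) hty' h2
      exact ⟨m, (le_of_lt hat).trans htm, hmy, h3, h4⟩

/-- if `x < y` are common neighbors of adjacent vertices `v < w` with
`v < x < y < w` and no common neighbor of `v` and `w` lies strictly between `x` and `y`,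
then `x` and `y` are adjacent. -/
theorem common_neighbors_adjacent {n : ℕ} (G : SimpleGraph (Fin n)) (hG : IsPersistent G)
    (v w x y : Fin n) (hvw : v < w) (hadj : G.Adj v w)
    (hvx : v < x) (hxy : x < y) (hyw : y < w)
    (hx : G.Adj v x ∧ G.Adj x w) (hy : G.Adj v y ∧ G.Adj y w)
    (hno : ∀ z : Fin n, x < z → z < y → ¬(G.Adj v z ∧ G.Adj z w)) :
    G.Adj x y := by
  have hX := hG.2.1
  -- find m ∈ [x, y) adjacent to both y and w
  obtain ⟨m, hxm, hmy, hmyA, hmwA⟩ := lemC1 G hG y w hyw hy.2 (y : ℕ) x (by omega) hxy hx.2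
  rcases eq_or_lt_of_le hxm with rfl | hxm'
  · exact hmyA
  · -- descending chain from y
    have C2 : ∀ (k : ℕ) (b : Fin n), (b : ℕ) ≤ k → m < b → b ≤ y → G.Adj v b → G.Adj x y := by
      intro k
      induction k with
      | zero =>
        intro b hk hmb hby hvb
        exact absurd (Fin.lt_def.mp hmb) (by omega)
      | succ k ih =>
        intro b hk hmb hby hvb
        obtain ⟨t, hxt, htb, h1, h2⟩ := lemEstar G hG v x hvx hx.1 (x : ℕ) v b (by omega)
          (le_refl v) hvx (hxm'.trans hmb) hvb
        rcases eq_or_lt_of_le hxt with heq | hxt'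
        · subst heq
          rcases eq_or_lt_of_le hby with heq2 | hby'
          · subst heq2; exact h2
          · exact hX x m b y hxm' hmb hby' h2 hmyA
        · rcases lt_trichotomy t m with htm | rfl | hmt
          · exact absurd ⟨h1, hX t m b w htm hmb (lt_of_le_of_lt hby hyw) h2 hmwA⟩
              (hno t hxt' (htm.trans hmy))
          · exact absurd ⟨h1, hmwA⟩ (hno t hxt' hmy)
          · exact ih t (by have := Fin.lt_def.mp htb; omega) hmt (le_of_lt (lt_of_lt_of_le htb hby)) h1
    exact C2 (y : ℕ) y (le_refl _) hmy (le_refl y) hy.1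
end

section
/- There are exactly 25 persistent graphs on 5 vertices. -/
/-! The count is an exhaustive check. A graph on a linearly ordered vertex set is determined by
one bit per increasing pair of vertices, so the graphs on `Fin 5` correspond to the `2 ^ 10`
functions from its ten increasing pairs to `Bool`, and persistence of each is decided by
evaluation. -/

set_option synthInstance.maxSize 1000 in
instance {n : ℕ} (G : SimpleGraph (Fin n)) [DecidableRel G.Adj] : Decidable (IsPersistent G) := by
  unfold IsPersistent; infer_instance

namespace SimpleGraph

variable {V : Type*} [LinearOrder V]

def ofIncreasingPairs (f : {p : V × V // p.1 < p.2} → Bool) : SimpleGraph V where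
  Adj a b := (if h : a < b then f ⟨(a, b), h⟩ else if h : b < a then f ⟨(b, a), h⟩ else false)
  symm := ⟨fun a b hab => by
    rcases lt_trichotomy a b with h | rfl | h
    · simpa [h, h.not_gt] using hab
    · exact hab
    · simpa [h, h.not_gt] using hab⟩
  loopless := ⟨fun a => by simp⟩

instance (f : {p : V × V // p.1 < p.2} → Bool) : DecidableRel (ofIncreasingPairs f).Adj :=
  fun _ _ => inferInstanceAs (Decidable (_ = true))

theorem ofIncreasingPairs_adj_of_lt (f : {p : V × V // p.1 < p.2} → Bool) {a b : V} (h : a < b) :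
    (ofIncreasingPairs f).Adj a b ↔ f ⟨(a, b), h⟩ = true := by
  simp [ofIncreasingPairs, h]

open Classical in
noncomputable def equivIncreasingPairs : SimpleGraph V ≃ ({p : V × V // p.1 < p.2} → Bool) where
  toFun G p := decide (G.Adj p.1.1 p.1.2)
  invFun := ofIncreasingPairs
  left_inv G := by
    ext a b
    rcases lt_trichotomy a b with h | rfl | h
    · simp [ofIncreasingPairs_adj_of_lt _ h]
    · simp
    · simp [adj_comm _ a, ofIncreasingPairs_adj_of_lt _ h]
  right_inv f := by
    funext ⟨⟨a, b⟩, h⟩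
    simp [ofIncreasingPairs_adj_of_lt _ h]

end SimpleGraph

set_option maxRecDepth 100000 in
/-- there are exactly 25 persistent graphs on 5 vertices. -/
theorem count_persistent_5 : Nat.card {G : SimpleGraph (Fin 5) // IsPersistent G} = 25 := by
  rw [← Nat.card_congr
      (SimpleGraph.equivIncreasingPairs.symm.subtypeEquiv
        (p := fun f => IsPersistent (SimpleGraph.ofIncreasingPairs f)) fun _ => Iff.rfl),
    Nat.card_eq_fintype_card]
  decide
end

section
/- Let G be a persistent graph on {1,...,n} and let Ĝ be its extension by vertices 0 and n+1 adjacent to everything. For an edge e = {v,w} of G with v < w, define ℓ(e) = max{ i < v : {i,w} is an edge of Ĝ } and r(e) = min{ i > w : {v,i} is an edge of Ĝ }. Then the four vertices ℓ(e), v, w, r(e) form a clique in Ĝ. -/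
/-!
Since `0` and `n + 1` are universal, the extension `Ĝ` again has the X-property and the
bar-property. In any graph on a well-ordered set with these two properties, if `ℓ` is the
last neighbour of `w` before `v` for an edge `v < w`, then `ℓ` is adjacent to `v`: otherwise
let `x` be the least neighbour of `ℓ` in `(v, w]`; a bar-witness `y` of the edge `ℓ x` lies
below `v` by minimality, so the X-property for `y x` and `v w` makes `y` a neighbour of `w`
above `ℓ`. Reversing the order gives `w ∼ r`, and `ℓ ∼ r` is one more application of the X-property.
-/

namespace SimpleGraph

variable {α : Type*} [LinearOrder α]

def HasXProperty (H : SimpleGraph α) : Prop :=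
  ∀ a b c d, a < b → b < c → c < d → H.Adj a c → H.Adj b d → H.Adj a d

/-- The bar-property; `c` witnesses that `a` and `b` are not consecutive. -/
def HasBarProperty (H : SimpleGraph α) : Prop :=
  ∀ a c b, a < c → c < b → H.Adj a b → ∃ x, a < x ∧ x < b ∧ H.Adj a x ∧ H.Adj x b

variable {H : SimpleGraph α}

theorem HasXProperty.dual (hX : H.HasXProperty) : (H.comap OrderDual.ofDual).HasXProperty :=
  fun _ _ _ d hab hbc hcd hac hbd =>
    (hX (OrderDual.ofDual d) _ _ _ hcd hbc hab hbd.symm hac.symm).symm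

theorem HasBarProperty.dual (hbar : H.HasBarProperty) :
    (H.comap OrderDual.ofDual).HasBarProperty := by
  intro a c b hac hcb hab
  obtain ⟨x, hbx, hxa, hbx', hxa'⟩ := hbar (OrderDual.ofDual b) _ _ hcb hac hab.symm
  exact ⟨OrderDual.toDual x, hxa, hbx, hxa'.symm, hbx'.symm⟩

theorem adj_left_of_isGreatest [WellFoundedLT α] (hX : H.HasXProperty)
    (hbar : H.HasBarProperty) {v w ℓ : α} (hvw : v < w) (he : H.Adj v w)
    (hℓ : IsGreatest {y | y < v ∧ H.Adj y w} ℓ) : H.Adj ℓ v := by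
  obtain ⟨⟨hℓv, hℓw⟩, hmax⟩ := hℓ
  suffices ∀ x, v ≤ x → x ≤ w → H.Adj ℓ x → H.Adj ℓ v from this w hvw.le le_rfl hℓw
  intro x
  induction x using WellFoundedLT.induction with
  | _ x ih =>
    intro hvx hxw hℓx
    rcases hvx.eq_or_lt with rfl | hvx
    · exact hℓx
    obtain ⟨y, hℓy, hyx, hℓy', hyx'⟩ := hbar ℓ v x hℓv hvx hℓx
    refine ih y hyx ?_ (hyx.le.trans hxw) hℓy'
    by_contra! hyv
    have hyw : H.Adj y w := by
      rcases hxw.eq_or_lt with rfl | hxw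
      · exact hyx'
      · exact hX y v x w hyv hvx hxw hyx' he
    exact (hmax ⟨hyv, hyw⟩).not_gt hℓy

theorem adj_right_of_isLeast [WellFoundedGT α] (hX : H.HasXProperty)
    (hbar : H.HasBarProperty) {v w r : α} (hvw : v < w) (he : H.Adj v w)
    (hr : IsLeast {y | w < y ∧ H.Adj v y} r) : H.Adj w r := by
  have hr' : IsGreatest {y | y < OrderDual.toDual w ∧
      (H.comap OrderDual.ofDual).Adj y (OrderDual.toDual v)} (OrderDual.toDual r) := by
    convert hr.dual using 2
    ext y
    exact and_congr_right fun _ => H.adj_comm _ _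
  exact (adj_left_of_isGreatest hX.dual hbar.dual (w := OrderDual.toDual v) hvw he.symm hr').symm

end SimpleGraph

open SimpleGraph

section Extension

variable {n : ℕ} {G : SimpleGraph (Fin n)}

theorem IsPersistent.hasBarProperty (hG : IsPersistent G) : G.HasBarProperty :=
  fun a c b hac hcb => hG.2.2 a b (by omega)

theorem IsPersistent.exists_gt_adj (hG : IsPersistent G) {a b : Fin n} (hab : a < b) :
    ∃ x, a < x ∧ G.Adj a x :=
  ⟨⟨a + 1, by omega⟩, Fin.lt_def.2 (Nat.lt_succ_self _), hG.1 _ _ rfl⟩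

theorem IsPersistent.exists_lt_adj (hG : IsPersistent G) {a b : Fin n} (hab : a < b) :
    ∃ x, x < b ∧ G.Adj x b :=
  ⟨⟨b - 1, by omega⟩, Fin.lt_def.2 (by simp; omega), hG.1 _ _ (by simp; omega)⟩

theorem Fin.exists_succ_castSucc_eq {u : Fin (n + 2)} (h0 : u ≠ 0) (hl : u ≠ Fin.last _) :
    ∃ a : Fin n, a.castSucc.succ = u := by
  have h0 : (u : ℕ) ≠ 0 := fun h => h0 (Fin.ext h)
  have hl : (u : ℕ) ≠ n + 1 := fun h => hl (Fin.ext h)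
  exact ⟨⟨u - 1, by omega⟩, Fin.ext (by simp; omega)⟩

theorem extendGraph_adj_zero {u : Fin (n + 2)} (hu : u ≠ 0) : (extendGraph n G).Adj 0 u :=
  ⟨hu.symm, Or.inl rfl⟩

theorem extendGraph_adj_last {u : Fin (n + 2)} (hu : u ≠ Fin.last _) :
    (extendGraph n G).Adj u (Fin.last _) :=
  ⟨hu, Or.inr (Or.inr (Or.inr (Or.inl rfl)))⟩

@[simp]
theorem extendGraph_adj_succ_castSucc {a b : Fin n} :
    (extendGraph n G).Adj a.castSucc.succ b.castSucc.succ ↔ G.Adj a b := by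
  refine ⟨fun ⟨_, h⟩ => ?_, fun h => ⟨by simpa using h.ne, Or.inr (Or.inr (Or.inr (Or.inr
    ⟨a, b, h, Or.inl ⟨rfl, rfl⟩⟩)))⟩⟩
  have := a.isLt; have := b.isLt
  simp only [Fin.val_succ, Fin.val_castSucc] at h
  rcases h with h | h | h | h | ⟨x, y, hxy, ⟨hx, hy⟩ | ⟨hx, hy⟩⟩
  all_goals try omega
  · obtain rfl : x = a := Fin.ext (by omega)
    obtain rfl : y = b := Fin.ext (by omega)
    exact hxy
  · obtain rfl : x = b := Fin.ext (by omega)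
    obtain rfl : y = a := Fin.ext (by omega)
    exact hxy.symm

theorem extendGraph_hasXProperty (hX : G.HasXProperty) : (extendGraph n G).HasXProperty := by
  intro a b c d hab hbc hcd hac hbd
  rcases eq_or_ne a 0 with rfl | ha
  · exact extendGraph_adj_zero (hab.trans (hbc.trans hcd)).ne'
  rcases eq_or_ne d (Fin.last _) with rfl | hd
  · exact extendGraph_adj_last (hab.trans (hbc.trans hcd)).ne
  have h0 : ∀ {u}, a ≤ u → u ≠ 0 := fun hu h => ha (le_antisymm (h ▸ hu) (Fin.zero_le _))
  have hl : ∀ {u}, u ≤ d → u ≠ Fin.last _ := fun hu h =>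
    hd (le_antisymm (Fin.le_last _) (h ▸ hu))
  obtain ⟨a, rfl⟩ := Fin.exists_succ_castSucc_eq ha (hl (hab.trans (hbc.trans hcd)).le)
  obtain ⟨b, rfl⟩ := Fin.exists_succ_castSucc_eq (h0 hab.le) (hl (hbc.trans hcd).le)
  obtain ⟨c, rfl⟩ := Fin.exists_succ_castSucc_eq (h0 (hab.trans hbc).le) (hl hcd.le)
  obtain ⟨d, rfl⟩ := Fin.exists_succ_castSucc_eq (h0 (hab.trans (hbc.trans hcd)).le) hd
  simp only [Fin.succ_lt_succ_iff, Fin.castSucc_lt_castSucc_iff, extendGraph_adj_succ_castSucc]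
    at hab hbc hcd hac hbd ⊢
  exact hX a b c d hab hbc hcd hac hbd

theorem extendGraph_hasBarProperty (hG : IsPersistent G) :
    (extendGraph n G).HasBarProperty := by
  intro a c b hac hcb hab
  have hc0 : c ≠ 0 := ((Fin.zero_le a).trans_lt hac).ne'
  have hcl : c ≠ Fin.last _ := (hcb.trans_le (Fin.le_last b)).ne
  have hal : a ≠ Fin.last _ := (hac.trans_le (Fin.le_last c)).ne
  have hb0 : b ≠ 0 := ((Fin.zero_le a).trans_lt (hac.trans hcb)).ne'
  have hlt_last : ∀ x : Fin n, x.castSucc.succ < Fin.last _ := fun x => Fin.lt_def.2 (by simp)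
  rcases eq_or_ne a 0 with rfl | ha <;> rcases eq_or_ne b (Fin.last _) with rfl | hb
  · exact ⟨c, hac, hcb, extendGraph_adj_zero hc0, extendGraph_adj_last hcl⟩
  · obtain ⟨c, rfl⟩ := Fin.exists_succ_castSucc_eq hc0 hcl
    obtain ⟨b, rfl⟩ := Fin.exists_succ_castSucc_eq hb0 hb
    obtain ⟨x, hxb, hx⟩ := hG.exists_lt_adj (by simpa using hcb)
    exact ⟨x.castSucc.succ, Fin.succ_pos _, by simpa using hxb,
      extendGraph_adj_zero (Fin.succ_ne_zero _), by simpa using hx⟩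
  · obtain ⟨c, rfl⟩ := Fin.exists_succ_castSucc_eq hc0 hcl
    obtain ⟨a, rfl⟩ := Fin.exists_succ_castSucc_eq ha hal
    obtain ⟨x, hax, hx⟩ := hG.exists_gt_adj (by simpa using hac)
    exact ⟨x.castSucc.succ, by simpa using hax, hlt_last x, by simpa using hx,
      extendGraph_adj_last (hlt_last x).ne⟩
  · obtain ⟨a, rfl⟩ := Fin.exists_succ_castSucc_eq ha hal
    obtain ⟨b, rfl⟩ := Fin.exists_succ_castSucc_eq hb0 hb
    obtain ⟨c, rfl⟩ := Fin.exists_succ_castSucc_eq hc0 hcl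
    simp only [Fin.succ_lt_succ_iff, Fin.castSucc_lt_castSucc_iff, extendGraph_adj_succ_castSucc]
      at hac hcb hab
    obtain ⟨x, hax, hxb, hx⟩ := hG.hasBarProperty a c b hac hcb hab
    exact ⟨x.castSucc.succ, by simpa using hax, by simpa using hxb, by simpa using hx⟩

end Extension

/-- for an edge `e = {v,w}` of a persistent graph `G`, the vertices
`ℓ(e), v, w, r(e)` form a clique in the extension `Ĝ`.  Here `V = v+1` and `W = w+1` are
the images of `v` and `w` in `Ĝ`, `L = ℓ(e)` is the largest vertex below `V` adjacent to
`W` in `Ĝ`, and `R = r(e)` is the smallest vertex above `W` adjacent to `V` in `Ĝ`. -/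
theorem xi_clique {n : ℕ} (G : SimpleGraph (Fin n)) (hG : IsPersistent G)
    (v w : Fin n) (hvw : v < w) (he : G.Adj v w)
    (V W L R : Fin (n + 2)) (hV : (V : ℕ) = (v : ℕ) + 1) (hW : (W : ℕ) = (w : ℕ) + 1)
    (hLV : L < V) (hLW : (extendGraph n G).Adj L W)
    (hLmax : ∀ i : Fin (n + 2), i < V → (extendGraph n G).Adj i W → i ≤ L)
    (hWR : W < R) (hVR : (extendGraph n G).Adj V R)
    (hRmin : ∀ i : Fin (n + 2), W < i → (extendGraph n G).Adj V i → R ≤ i) :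
    (extendGraph n G).Adj L V ∧ (extendGraph n G).Adj L W ∧ (extendGraph n G).Adj L R ∧
    (extendGraph n G).Adj V W ∧ (extendGraph n G).Adj V R ∧ (extendGraph n G).Adj W R := by
  obtain rfl : V = v.castSucc.succ := Fin.ext (by simp [hV])
  obtain rfl : W = w.castSucc.succ := Fin.ext (by simp [hW])
  have hX := extendGraph_hasXProperty hG.2.1
  have hbar := extendGraph_hasBarProperty hG
  have hVW : v.castSucc.succ < w.castSucc.succ := by simpa using hvw
  have he' := extendGraph_adj_succ_castSucc.2 he
  have hL : IsGreatest {i | i < v.castSucc.succ ∧ (extendGraph n G).Adj i w.castSucc.succ} L :=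
    ⟨⟨hLV, hLW⟩, fun i hi => hLmax i hi.1 hi.2⟩
  have hR : IsLeast {i | w.castSucc.succ < i ∧ (extendGraph n G).Adj v.castSucc.succ i} R :=
    ⟨⟨hWR, hVR⟩, fun i hi => hRmin i hi.1 hi.2⟩
  exact ⟨adj_left_of_isGreatest hX hbar hVW he' hL, hLW, hX L _ _ R hLV hVW hWR hLW hVR, he',
    hVR, adj_right_of_isLeast hX hbar hVW he' hR⟩
end

section
/- Let G be a persistent graph on {1,...,n}, let Ĝ be its extension by universal vertices 0 and n+1, and for an edge e = {v,w} (v < w) of G define ξ(e) = {ℓ(e), v, w, r(e)} where ℓ(e) = max{ i < v : {i,w} ∈ E(Ĝ) } and r(e) = min{ i > w : {v,i} ∈ E(Ĝ) }. Then for any edge e of G, if a < b < c are three of the four vertices of ξ(e), there is no edge {x,y} of G with a < x < b < y < c. -/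
def HasXProperty {n : ℕ} (G : SimpleGraph (Fin n)) : Prop :=
  ∀ a b c d : Fin n, a < b → b < c → c < d → G.Adj a c → G.Adj b d → G.Adj a d

def HasBarProperty {n : ℕ} (G : SimpleGraph (Fin n)) : Prop :=
  ∀ a b : Fin n, (a : ℕ) + 1 < (b : ℕ) → G.Adj a b →
    ∃ x : Fin n, a < x ∧ x < b ∧ G.Adj a x ∧ G.Adj x b

lemma IsPersistent.hasXProperty {n : ℕ} {G : SimpleGraph (Fin n)} (hG : IsPersistent G) :
    HasXProperty G :=
  hG.2.1

lemma IsPersistent.hasBarProperty_s10 {n : ℕ} {G : SimpleGraph (Fin n)} (hG : IsPersistent G) :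
    HasBarProperty G :=
  hG.2.2

lemma extendGraph_adj_of_adj {n : ℕ} {G : SimpleGraph (Fin n)} {x y : Fin n} (h : G.Adj x y)
    {X Y : Fin (n + 2)} (hX : (X : ℕ) = x + 1) (hY : (Y : ℕ) = y + 1) :
    (extendGraph n G).Adj X Y := by
  refine ⟨fun hXY ↦ h.ne (Fin.ext ?_), .inr <| .inr <| .inr <| .inr ⟨x, y, h, .inl ⟨?_, ?_⟩⟩⟩
  all_goals grind

theorem HasXProperty.not_adj_of_crosses {n : ℕ} {G : SimpleGraph (Fin n)} (hX : HasXProperty G)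
    (hbar : HasBarProperty G) {v w : Fin n} (hvw : v < w) (he : G.Adj v w) {l r : ℕ}
    (hl : ∀ x : Fin n, x < v → G.Adj x w → (x : ℕ) + 1 ≤ l)
    (hr : ∀ y : Fin n, w < y → G.Adj v y → r ≤ (y : ℕ) + 1)
    {x y : Fin n} (hxy : G.Adj x y) (hlx : l < (x : ℕ) + 1) (hyr : (y : ℕ) + 1 < r)
    (hcross : (x < v ∧ v < y) ∨ (x < w ∧ w < y)) : False := by
  rcases lt_trichotomy x v with hxv | rfl | hvx
  · rcases lt_trichotomy y w with hyw | rfl | hwy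
    · have := hl x hxv (hX x v y w hxv (by omega) hyw hxy he)
      omega
    · have := hl x hxv hxy
      omega
    · obtain ⟨z, hxz, hzy, hxz_adj, hzy_adj⟩ := hbar x y (by omega) hxy
      by_cases hzw : z < w
      · exact hX.not_adj_of_crosses hbar hvw he hl hr hzy_adj (by omega) hyr (by omega)
      · exact hX.not_adj_of_crosses hbar hvw he hl hr hxz_adj hlx (by omega) (by omega)
  · have := hr y (by omega) hxy
    omega
  · have := hr y (by omega) (hX v x w y hvx (by omega) (by omega) he hxy)
    omega
termination_by (y : ℕ) - x

theorem xi_no_crossing_general {n : ℕ} (G : SimpleGraph (Fin n)) (hG : IsPersistent G)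
    (v w : Fin n) (hvw : v < w) (he : G.Adj v w)
    (V W L R : Fin (n + 2)) (hV : (V : ℕ) = (v : ℕ) + 1) (hW : (W : ℕ) = (w : ℕ) + 1)
    (hLV : L < V)
    (hLmax : ∀ i : Fin (n + 2), i < V → (extendGraph n G).Adj i W → i ≤ L)
    (hWR : W < R)
    (hRmin : ∀ i : Fin (n + 2), W < i → (extendGraph n G).Adj V i → R ≤ i)
    (a b c : Fin (n + 2)) (ha : a ∈ ({L, V, W, R} : Set (Fin (n + 2))))
    (hb : b ∈ ({L, V, W, R} : Set (Fin (n + 2))))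
    (hc : c ∈ ({L, V, W, R} : Set (Fin (n + 2))))
    (hab : a < b) (hbc : b < c) :
    ¬ ∃ x y : Fin n, G.Adj x y ∧
        (a : ℕ) < (x : ℕ) + 1 ∧ (x : ℕ) + 1 < (b : ℕ) ∧
        (b : ℕ) < (y : ℕ) + 1 ∧ (y : ℕ) + 1 < (c : ℕ) := by
  have hl (x : Fin n) (hxv : x < v) (hxw : G.Adj x w) : (x : ℕ) + 1 ≤ L :=
    hLmax ⟨x + 1, by omega⟩ (by simp [Fin.lt_def]; omega) (extendGraph_adj_of_adj hxw rfl hW)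
  have hr (y : Fin n) (hwy : w < y) (hvy : G.Adj v y) : (R : ℕ) ≤ y + 1 :=
    hRmin ⟨y + 1, by omega⟩ (by simp [Fin.lt_def]; omega) (extendGraph_adj_of_adj hvy hV rfl)
  rintro ⟨x, y, hxy, hax, hxb, hby, hyc⟩
  simp only [Set.mem_insert_iff, Set.mem_singleton_iff, ← Fin.val_inj] at ha hb hc
  exact hG.hasXProperty.not_adj_of_crosses hG.hasBarProperty_s10 hvw he hl hr hxy
    (by omega) (by omega) (by omega)

/-- if `a < b < c` are three of the four vertices of the 3-simplex
`ξ(e) = {ℓ(e), v, w, r(e)}` associated with an edge `e = {v,w}` of `G`, then `G` contains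
no edge `{x,y}` with `a < x < b < y < c` (vertices of `G` compared via their images in `Ĝ`). -/
theorem xi_no_crossing {n : ℕ} (G : SimpleGraph (Fin n)) (hG : IsPersistent G)
    (v w : Fin n) (hvw : v < w) (he : G.Adj v w)
    (V W L R : Fin (n + 2)) (hV : (V : ℕ) = (v : ℕ) + 1) (hW : (W : ℕ) = (w : ℕ) + 1)
    (hLV : L < V) (hLW : (extendGraph n G).Adj L W)
    (hLmax : ∀ i : Fin (n + 2), i < V → (extendGraph n G).Adj i W → i ≤ L)
    (hWR : W < R) (hVR : (extendGraph n G).Adj V R)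
    (hRmin : ∀ i : Fin (n + 2), W < i → (extendGraph n G).Adj V i → R ≤ i)
    (a b c : Fin (n + 2)) (ha : a ∈ ({L, V, W, R} : Set (Fin (n + 2))))
    (hb : b ∈ ({L, V, W, R} : Set (Fin (n + 2))))
    (hc : c ∈ ({L, V, W, R} : Set (Fin (n + 2))))
    (hab : a < b) (hbc : b < c) :
    ¬ ∃ x y : Fin n, G.Adj x y ∧
        (a : ℕ) < (x : ℕ) + 1 ∧ (x : ℕ) + 1 < (b : ℕ) ∧
        (b : ℕ) < (y : ℕ) + 1 ∧ (y : ℕ) + 1 < (c : ℕ) :=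
  xi_no_crossing_general G hG v w hvw he V W L R hV hW hLV hLmax hWR hRmin a b c ha hb hc hab hbc
end

section
/- Let G be a persistent graph on {1,...,n} and let e = {v,w} be an edge of G with v < w. If G' = G minus the edge e is again a persistent graph (necessarily v + 1 < w), then there is a unique vertex y with v < y < w such that both {v,y} and {y,w} are edges of G'. -/
/-- if removing the edge `{v,w}` from a persistent graph again yields a
persistent graph, then `v + 1 < w` and there is a unique vertex `y` strictly between
`v` and `w` adjacent to both in the smaller graph. -/
theorem unique_middle_vertex {n : ℕ} (G : SimpleGraph (Fin n)) (hG : IsPersistent G)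
    (v w : Fin n) (hvw : v < w) (he : G.Adj v w)
    (hG' : IsPersistent (G.deleteEdges {s(v, w)})) :
    (v : ℕ) + 1 < (w : ℕ) ∧
    ∃! y : Fin n, v < y ∧ y < w ∧
      (G.deleteEdges {s(v, w)}).Adj v y ∧ (G.deleteEdges {s(v, w)}).Adj y w := by
  obtain ⟨hpath, hX, hbar⟩ := hG
  obtain ⟨hpath', hX', hbar'⟩ := hG'
  have hnot : ¬ (G.deleteEdges {s(v, w)}).Adj v w := by
    simp [SimpleGraph.deleteEdges_adj]
  have hlt : (v : ℕ) + 1 < (w : ℕ) := by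
    rcases lt_or_eq_of_le (Nat.succ_le_of_lt hvw) with h | h
    · exact h
    · exact absurd (hpath' v w h) hnot
  refine ⟨hlt, ?_⟩
  obtain ⟨x, hvx, hxw, hax, haxw⟩ := hbar v w hlt he
  have h1 : (G.deleteEdges {s(v, w)}).Adj v x := by
    refine SimpleGraph.deleteEdges_adj.2 ⟨hax, ?_⟩
    intro h'
    rcases Sym2.eq_iff.mp (Set.mem_singleton_iff.mp h') with ⟨-, h''⟩ | ⟨h'', -⟩
    · exact hxw.ne h''
    · exact hvw.ne h''
  have h2 : (G.deleteEdges {s(v, w)}).Adj x w := by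
    refine SimpleGraph.deleteEdges_adj.2 ⟨haxw, ?_⟩
    intro h'
    rcases Sym2.eq_iff.mp (Set.mem_singleton_iff.mp h') with ⟨h'', -⟩ | ⟨-, h''⟩
    · exact hvx.ne h''.symm
    · exact hvw.ne h''.symm
  refine ⟨x, ⟨hvx, hxw, h1, h2⟩, ?_⟩
  rintro y ⟨hvy, hyw, h3, h4⟩
  rcases lt_trichotomy y x with h | h | h
  · exact absurd (hX' v y x w hvy h hxw h1 h4) hnot
  · exact h
  · exact absurd (hX' v x y w hvx h hyw h3 h2) hnot
end

section
/- In a persistent graph G on {1,...,n}, every cycle v_1 < v_2 < ... < v_k (k ≥ 4) whose consecutive elements (cyclically) are all adjacent in G has a chord; that is, if v_1 < ... < v_k with {v_i, v_{i+1}} ∈ E(G) for all i < k and {v_1, v_k} ∈ E(G), then some non-consecutive pair {v_i, v_j} (not equal to {v_1,v_k}) is an edge of G. -/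
/-- in a persistent graph, every cycle `v_0 < v_1 < … < v_{k-1}` (with `k ≥ 4`)
following the vertex order has a chord. -/
theorem order_cycle_has_chord {n : ℕ} (G : SimpleGraph (Fin n)) (hG : IsPersistent G)
    (k : ℕ) (hk : 4 ≤ k) (v : ℕ → Fin n)
    (hmono : ∀ i, i + 1 < k → v i < v (i + 1))
    (hadj : ∀ i, i + 1 < k → G.Adj (v i) (v (i + 1)))
    (hclose : G.Adj (v 0) (v (k - 1))) :
    ∃ i j, i + 1 < j ∧ j < k ∧ ¬(i = 0 ∧ j = k - 1) ∧ G.Adj (v i) (v j) := by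
  obtain ⟨hham, hX, hbar⟩ := hG
  have hmono' : ∀ i j, i < j → j < k → v i < v j := by
    intro i j hij hjk
    induction j with
    | zero => omega
    | succ j ih =>
      rcases Nat.lt_or_ge i j with h | h
      · exact lt_trans (ih h (by omega)) (hmono j (by omega))
      · have hij' : i = j := by omega
        subst hij'
        exact hmono i hjk
  -- edge from v (k-2) to v (k-1)
  have hlast : G.Adj (v (k-2)) (v (k-1)) := by
    have h := hadj (k-2) (by omega)
    have e : k - 2 + 1 = k - 1 := by omega
    rwa [e] at h
  -- position lemma
  have hpos : ∀ x : Fin n, v 1 ≤ x → x ≤ v (k-2) →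
      (∃ j, 1 ≤ j ∧ j ≤ k-2 ∧ x = v j) ∨
      (∃ j, 1 ≤ j ∧ j ≤ k-3 ∧ v j < x ∧ x < v (j+1)) := by
    intro x hx1 hx2
    have key : ∀ d t, t + d = k - 2 → 1 ≤ t → v t ≤ x →
        (∃ j, 1 ≤ j ∧ j ≤ k-2 ∧ x = v j) ∨
        (∃ j, 1 ≤ j ∧ j ≤ k-3 ∧ v j < x ∧ x < v (j+1)) := by
      intro d
      induction d with
      | zero =>
        intro t ht ht1 hvt
        have : t = k - 2 := by omega
        subst this
        exact Or.inl ⟨k-2, by omega, le_rfl, le_antisymm hx2 hvt⟩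
      | succ d ih =>
        intro t ht ht1 hvt
        rcases lt_or_ge x (v (t+1)) with hlt | hle
        · rcases eq_or_lt_of_le hvt with heq | hlt'
          · exact Or.inl ⟨t, ht1, by omega, heq.symm⟩
          · exact Or.inr ⟨t, ht1, by omega, hlt', hlt⟩
        · exact ih (t+1) (by omega) (by omega) hle
    exact key (k - 3) 1 (by omega) le_rfl hx1
  -- main claim
  have main : ∀ m : ℕ, ∀ u w : Fin n, (w:ℕ) - (u:ℕ) ≤ m → G.Adj u w →
      v 0 ≤ u → u < v 1 → v (k-2) < w → w ≤ v (k-1) →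
      ∃ i j, i + 1 < j ∧ j < k ∧ ¬(i = 0 ∧ j = k - 1) ∧ G.Adj (v i) (v j) := by
    intro m
    induction m with
    | zero =>
      intro u w hm _ _ hu1 hw2 _
      have h1 : v 1 ≤ v (k-2) := le_of_lt (hmono' 1 (k-2) (by omega) (by omega))
      have : (u:ℕ) < (w:ℕ) := by
        have := lt_of_lt_of_le (lt_of_lt_of_le hu1 h1) (le_of_lt hw2)
        exact this
      omega
    | succ m ih =>
      intro u w hm huw hu0 hu1 hw2 hw1
      have h12 : v 1 < v (k-2) := hmono' 1 (k-2) (by omega) (by omega)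
      have hgap : (u:ℕ) + 1 < (w:ℕ) := by
        have h1 : (u:ℕ) < (v 1 : Fin n) := hu1
        have h2 : ((v 1 : Fin n) : ℕ) < ((v (k-2) : Fin n) : ℕ) := h12
        have h3 : ((v (k-2) : Fin n) : ℕ) < (w:ℕ) := hw2
        omega
      obtain ⟨x, hux, hxw, haux, haxw⟩ := hbar u w hgap huw
      rcases lt_or_ge x (v 1) with hx1 | hx1
      · -- x < v 1 : recurse with (x, w)
        have : (w:ℕ) - (x:ℕ) ≤ m := by
          have h1 : (u:ℕ) < (x:ℕ) := hux
          omega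
        exact ih x w this haxw (le_trans hu0 (le_of_lt hux)) hx1 hw2 hw1
      rcases lt_or_ge (v (k-2)) x with hx2 | hx2
      · -- v (k-2) < x : recurse with (u, x)
        have : (x:ℕ) - (u:ℕ) ≤ m := by
          have h1 : (x:ℕ) < (w:ℕ) := hxw
          have h2 : (u:ℕ) < (x:ℕ) := hux
          omega
        exact ih u x this haux hu0 hu1 hx2 (le_trans (le_of_lt hxw) hw1)
      -- v 1 ≤ x ≤ v (k-2)
      rcases hpos x hx1 hx2 with ⟨j, hj1, hj2, hxj⟩ | ⟨j, hj1, hj3, hjx, hxj⟩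
      · rcases Nat.lt_or_ge j 2 with hj | hj
        · -- j = 1 : x = v 1, edge v1-w
          have hj' : j = 1 := by omega
          subst hj'
          rw [hxj] at haxw
          rcases eq_or_lt_of_le hw1 with heq | hlt
          · exact ⟨1, k-1, by omega, by omega, by omega, heq ▸ haxw⟩
          · have := hX (v 1) (v (k-2)) w (v (k-1)) h12 hw2 hlt haxw hlast
            exact ⟨1, k-1, by omega, by omega, by omega, this⟩
        · -- j ≥ 2 : x = v j, edge u-vj
          rw [hxj] at haux
          rcases eq_or_lt_of_le hu0 with heq | hlt
          · exact ⟨0, j, by omega, by omega, by omega, heq ▸ haux⟩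
          · have h1j : v 1 < v j := hmono' 1 j (by omega) (by omega)
            have := hX (v 0) u (v 1) (v j) hlt hu1 h1j (hadj 0 (by omega)) haux
            exact ⟨0, j, by omega, by omega, by omega, this⟩
      · -- v j < x < v (j+1), 1 ≤ j ≤ k-3
        have huj : u < v j := lt_of_lt_of_le hu1 (by
          rcases Nat.eq_or_lt_of_le hj1 with h | h
          · exact le_of_eq (congrArg v h)
          · exact le_of_lt (hmono' 1 j (by omega) (by omega)))
        have hadjj : G.Adj (v j) (v (j+1)) := hadj j (by omega)
        have huj1 : G.Adj u (v (j+1)) := hX u (v j) x (v (j+1)) huj hjx hxj haux hadjj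
        rcases eq_or_lt_of_le hu0 with heq | hlt
        · exact ⟨0, j+1, by omega, by omega, by omega, heq ▸ huj1⟩
        · have h1j : v 1 < v (j+1) := hmono' 1 (j+1) (by omega) (by omega)
          have := hX (v 0) u (v 1) (v (j+1)) hlt hu1 h1j (hadj 0 (by omega)) huj1
          exact ⟨0, j+1, by omega, by omega, by omega, this⟩
  exact main ((v (k-1) : Fin n) : ℕ) (v 0) (v (k-1)) (by omega) hclose le_rfl
    (hmono 0 (by omega)) (hmono' (k-2) (k-1) (by omega) (by omega)) le_rfl
end

section
/- Let G be a persistent graph on {1,...,n} and let {a,b} be an edge with a < b. Then {a,x} is an edge for the largest neighbor x of a that is less than b; moreover this x is also adjacent to b. In other words, the largest element of N(a) ∩ (a, b) is a common neighbor of a and b whenever b > a + 1. -/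
/-- for an edge `{a,b}` with `b > a + 1`, the largest neighbor `x` of `a`
with `x < b` satisfies `a < x` and is also adjacent to `b`. -/
theorem largest_neighbor_common {n : ℕ} (G : SimpleGraph (Fin n)) (hG : IsPersistent G)
    (a b x : Fin n) (hab : (a : ℕ) + 1 < (b : ℕ)) (he : G.Adj a b)
    (hx : G.Adj a x) (hxb : x < b)
    (hmax : ∀ y : Fin n, G.Adj a y → y < b → y ≤ x) :
    a < x ∧ G.Adj x b := by
  obtain ⟨h1, hX, hbar⟩ := hG
  obtain ⟨y0, hay0, hy0b, hady0, hy0adjb⟩ := hbar a b hab he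
  have hax : a < x := lt_of_lt_of_le hay0 (hmax y0 hady0 hy0b)
  refine ⟨hax, ?_⟩
  have key : ∀ k : ℕ, ∀ y : Fin n, (x : ℕ) - (y : ℕ) = k → a ≤ y → y ≤ x →
      G.Adj y b → G.Adj x b := by
    intro k
    induction k using Nat.strong_induction_on with
    | _ k ih =>
      intro y hk hay hyx hyb
      rcases eq_or_lt_of_le hyx with h | h
      · rwa [h] at hyb
      · have hyb' : (y : ℕ) + 1 < (b : ℕ) := by
          have := Fin.lt_def.mp h; have := Fin.lt_def.mp hxb; omega
        obtain ⟨z, hyz, hzb, hyzadj, hzbadj⟩ := hbar y b hyb' hyb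
        have hzx : z ≤ x := by
          rcases eq_or_lt_of_le hay with hay' | hay'
          · exact hmax z (hay' ▸ hyzadj) hzb
          · by_contra hcon
            push_neg at hcon
            exact absurd (hmax z (hX a y x z hay' h hcon hx hyzadj) hzb) (not_le.mpr hcon)
        rcases eq_or_lt_of_le hzx with hzx' | hzx'
        · rwa [hzx'] at hzbadj
        · have hlt : (x : ℕ) - (z : ℕ) < k := by
            have := Fin.lt_def.mp hyz; have := Fin.lt_def.mp hzx'
            have := Fin.le_def.mp hyx; omega
          exact ih _ hlt z rfl (le_of_lt (lt_of_le_of_lt hay hyz)) (le_of_lt hzx') hzbadj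
  exact key _ y0 rfl (le_of_lt hay0) (hmax y0 hady0 hy0b) hy0adjb
end
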